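/- Fix even n and let Λ^n be the even configuration space. For a perfect matching σ of [n], define the stratum indicator χ_σ(x) = 𝟙{σ·x = x} / √π(x) where π(x) = ∏_i (n_i(x)!!)² and (σ·x)_a = x_{σ(a)}. Then for every pair of sites i < j, χ_σ is annihilated by the colored eigenvector moment flow generator B_{ij} = M_{ij} − E_{ij}: indeed (M_{ij} χ_σ)(x) = (E_{ij} χ_σ)(x) for all x ∈ Λ^n, where M_{ij} f(x) = ((n_j(x)+1)/(n_i(x)−1)) Σ_{a≠b}(f(m_{ab}^{ij}x) − f(x)) + ((n_i(x)+1)/(n_j(x)−1)) Σ_{a≠b}(f(m_{ab}^{ji}x) − f(x)) and E_{ij} f(x) = 2 Σ_{a≠b}(f(s_{ab}^{ij}x) − f(x)). -/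
import Mathlib


open Finset

noncomputable section
open scoped Classical

/-- particle number of configuration `x` at site `i` -/
def pnum {N n : ℕ} (x : Fin n → Fin N) (i : Fin N) : ℕ :=
  (Finset.univ.filter fun a => x a = i).card

/-- the paper's double factorial: `k!!` is the standard double factorial of `k - 1`,
with `0!! = 1`. -/
def dfact (k : ℕ) : ℕ := Nat.doubleFactorial (k - 1)

/-- the reversible measure `π(x) = ∏_i (n_i(x)!!)²` -/
def confWeight {N n : ℕ} (x : Fin n → Fin N) : ℕ :=
  ∏ i, (dfact (pnum x i)) ^ 2

/-- `m_{ab}^{ij} x`: moves particles `a` and `b` from site `i` to site `j`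
when `x_a = x_b = i`, otherwise does nothing. -/
def moveMap {N n : ℕ} (i j : Fin N) (a b : Fin n) (x : Fin n → Fin N) : Fin n → Fin N :=
  fun c => if x a = i ∧ x b = i ∧ (c = a ∨ c = b) then j else x c

/-- `s_{ab}^{ij} x`: swaps particle `a` at site `i` with particle `b` at site `j`
when `x_a = i, x_b = j`, otherwise does nothing. -/
def swapMap {N n : ℕ} (i j : Fin N) (a b : Fin n) (x : Fin n → Fin N) : Fin n → Fin N :=
  fun c => if x a = i ∧ x b = j then (if c = a then j else if c = b then i else x c) else x c

/-- the move operator `M_{ij}` of the colored eigenvector moment flow -/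
def moveOp {N n : ℕ} (i j : Fin N) (f : (Fin n → Fin N) → ℝ) (x : Fin n → Fin N) : ℝ :=
  ((pnum x j : ℝ) + 1) / ((pnum x i : ℝ) - 1) *
      ∑ a, ∑ b ∈ Finset.univ.erase a, (f (moveMap i j a b x) - f x)
    + ((pnum x i : ℝ) + 1) / ((pnum x j : ℝ) - 1) *
      ∑ a, ∑ b ∈ Finset.univ.erase a, (f (moveMap j i a b x) - f x)

/-- the exchange operator `E_{ij}` of the colored eigenvector moment flow -/
def exchOp {N n : ℕ} (i j : Fin N) (f : (Fin n → Fin N) → ℝ) (x : Fin n → Fin N) : ℝ :=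
  2 * ∑ a, ∑ b ∈ Finset.univ.erase a, (f (swapMap i j a b x) - f x)

/-- the stratum indicator `χ_σ(x) = 𝟙{σ·x = x} / √π(x)` -/
def chi {N n : ℕ} (σ : Equiv.Perm (Fin n)) (x : Fin n → Fin N) : ℝ :=
  (if ∀ a, x (σ a) = x a then (1 : ℝ) else 0) / Real.sqrt (confWeight x)


lemma dfact_add_two (k : ℕ) : dfact (k+2) = (k+1) * dfact k := by
  cases k with
  | zero => rfl
  | succ m => simp [dfact, Nat.doubleFactorial]

lemma pnum_update {N n : ℕ} {x y : Fin n → Fin N} {a b : Fin n} (hab : a ≠ b)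
    (h : ∀ c, c ≠ a → c ≠ b → y c = x c) (k : Fin N) :
    pnum y k + ((if x a = k then 1 else 0) + (if x b = k then 1 else 0))
      = pnum x k + ((if y a = k then 1 else 0) + (if y b = k then 1 else 0)) := by
  have key : ∀ z : Fin n → Fin N, pnum z k =
      ((if z a = k then 1 else 0) + (if z b = k then 1 else 0)) +
        ∑ c ∈ (Finset.univ.erase a).erase b, (if z c = k then 1 else 0) := by
    intro z
    rw [pnum, Finset.card_filter]
    rw [← Finset.add_sum_erase _ _ (Finset.mem_univ a)]
    rw [← Finset.add_sum_erase _ _ (Finset.mem_erase.mpr ⟨hab.symm, Finset.mem_univ b⟩)]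
    ring
  rw [key x, key y]
  have h2 : ∑ c ∈ (Finset.univ.erase a).erase b, (if y c = k then 1 else 0)
      = ∑ c ∈ (Finset.univ.erase a).erase b, (if x c = k then 1 else 0) := by
    apply Finset.sum_congr rfl
    intro c hc
    simp only [Finset.mem_erase] at hc
    rw [h c hc.2.1 hc.1]
  rw [h2]; ring

lemma moveMap_eval {N n : ℕ} {i j : Fin N} {a b : Fin n} {x : Fin n → Fin N}
    (ha : x a = i) (hb : x b = i) :
    (moveMap i j a b x a = j) ∧ (moveMap i j a b x b = j) ∧
      (∀ c, c ≠ a → c ≠ b → moveMap i j a b x c = x c) := by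
  refine ⟨by simp [moveMap, ha, hb], by simp [moveMap, ha, hb], fun c h1 h2 => by
    simp [moveMap, h1, h2]⟩

lemma moveMap_trivial {N n : ℕ} {i j : Fin N} {a b : Fin n} {x : Fin n → Fin N}
    (h : ¬ (x a = i ∧ x b = i)) : moveMap i j a b x = x := by
  funext c
  simp only [moveMap, ite_eq_right_iff]
  intro hc
  exact absurd ⟨hc.1, hc.2.1⟩ h

lemma swapMap_eval {N n : ℕ} {i j : Fin N} {a b : Fin n} {x : Fin n → Fin N}
    (ha : x a = i) (hb : x b = j) (hij : i ≠ j) :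
    (swapMap i j a b x a = j) ∧ (swapMap i j a b x b = i) ∧
      (∀ c, c ≠ a → c ≠ b → swapMap i j a b x c = x c) := by
  have hab : a ≠ b := fun e => hij (by rw [← ha, e, hb])
  exact ⟨by simp [swapMap, ha, hb], by simp [swapMap, ha, hb, hab.symm],
    fun c h1 h2 => by simp [swapMap, ha, hb, h1, h2]⟩

lemma swapMap_trivial {N n : ℕ} {i j : Fin N} {a b : Fin n} {x : Fin n → Fin N}
    (h : ¬ (x a = i ∧ x b = j)) : swapMap i j a b x = x := by
  funext c
  simp only [swapMap, ite_eq_right_iff]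
  intro hc
  exact absurd hc h

lemma pnum_move_i {N n : ℕ} {i j : Fin N} {a b : Fin n} {x : Fin n → Fin N}
    (ha : x a = i) (hb : x b = i) (hab : a ≠ b) (hij : i ≠ j) :
    pnum (moveMap i j a b x) i + 2 = pnum x i := by
  obtain ⟨e1, e2, e3⟩ := moveMap_eval (i := i) (j := j) ha hb
  have := pnum_update hab e3 i
  rw [ha, hb, e1, e2] at this
  simp [hij, hij.symm] at this
  omega

lemma pnum_move_j {N n : ℕ} {i j : Fin N} {a b : Fin n} {x : Fin n → Fin N}
    (ha : x a = i) (hb : x b = i) (hab : a ≠ b) (hij : i ≠ j) :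
    pnum (moveMap i j a b x) j = pnum x j + 2 := by
  obtain ⟨e1, e2, e3⟩ := moveMap_eval (i := i) (j := j) ha hb
  have := pnum_update hab e3 j
  rw [ha, hb, e1, e2] at this
  simp [hij, hij.symm] at this
  omega

lemma pnum_move_other {N n : ℕ} {i j : Fin N} {a b : Fin n} {x : Fin n → Fin N}
    (ha : x a = i) (hb : x b = i) (hab : a ≠ b) {k : Fin N} (hki : k ≠ i) (hkj : k ≠ j) :
    pnum (moveMap i j a b x) k = pnum x k := by
  obtain ⟨e1, e2, e3⟩ := moveMap_eval (i := i) (j := j) ha hb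
  have := pnum_update hab e3 k
  simp only [ha, hb, e1, e2, if_neg hki.symm, if_neg hkj.symm] at this
  omega

lemma pnum_swap {N n : ℕ} {i j : Fin N} {a b : Fin n} {x : Fin n → Fin N}
    (ha : x a = i) (hb : x b = j) (hij : i ≠ j) (k : Fin N) :
    pnum (swapMap i j a b x) k = pnum x k := by
  have hab : a ≠ b := fun e => hij (by rw [← ha, e, hb])
  obtain ⟨e1, e2, e3⟩ := swapMap_eval ha hb hij
  have := pnum_update hab e3 k
  rw [ha, hb, e1, e2] at this
  omega

lemma confWeight_pos {N n : ℕ} (x : Fin n → Fin N) : 0 < confWeight x :=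
  Finset.prod_pos fun k _ => pow_pos (Nat.doubleFactorial_pos _) 2

lemma sqrt_confWeight_pos {N n : ℕ} (x : Fin n → Fin N) :
    0 < Real.sqrt (confWeight x) :=
  Real.sqrt_pos.mpr (by exact_mod_cast confWeight_pos x)

lemma confWeight_swap {N n : ℕ} {i j : Fin N} {a b : Fin n} {x : Fin n → Fin N}
    (ha : x a = i) (hb : x b = j) (hij : i ≠ j) :
    confWeight (swapMap i j a b x) = confWeight x := by
  unfold confWeight
  exact Finset.prod_congr rfl fun k _ => by rw [pnum_swap ha hb hij k]

lemma confWeight_move {N n : ℕ} {i j : Fin N} {a b : Fin n} {x : Fin n → Fin N}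
    (ha : x a = i) (hb : x b = i) (hab : a ≠ b) (hij : i ≠ j) :
    confWeight x * (pnum x j + 1)^2
      = confWeight (moveMap i j a b x) * (pnum (moveMap i j a b x) i + 1)^2 := by
  set y := moveMap i j a b x with hy
  have e1 : pnum y i + 2 = pnum x i := pnum_move_i ha hb hab hij
  have e2 : pnum y j = pnum x j + 2 := pnum_move_j ha hb hab hij
  have split : ∀ z : Fin n → Fin N, confWeight z =
      (dfact (pnum z i))^2 * ((dfact (pnum z j))^2 *
        ∏ k ∈ (Finset.univ.erase i).erase j, (dfact (pnum z k))^2) := by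
    intro z
    rw [confWeight, ← Finset.mul_prod_erase _ _ (Finset.mem_univ i),
      ← Finset.mul_prod_erase _ _ (Finset.mem_erase.mpr ⟨hij.symm, Finset.mem_univ j⟩)]
  rw [split x, split y]
  have e3 : ∏ k ∈ (Finset.univ.erase i).erase j, (dfact (pnum y k))^2
      = ∏ k ∈ (Finset.univ.erase i).erase j, (dfact (pnum x k))^2 := by
    apply Finset.prod_congr rfl
    intro k hk
    simp only [Finset.mem_erase] at hk
    rw [pnum_move_other ha hb hab hk.2.1 hk.1]
  rw [e3, ← e1, e2, dfact_add_two, dfact_add_two]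
  ring

lemma sqrt_confWeight_move {N n : ℕ} {i j : Fin N} {a b : Fin n} {x : Fin n → Fin N}
    (ha : x a = i) (hb : x b = i) (hab : a ≠ b) (hij : i ≠ j) :
    Real.sqrt (confWeight (moveMap i j a b x)) * ((pnum x i : ℝ) - 1)
      = Real.sqrt (confWeight x) * ((pnum x j : ℝ) + 1) := by
  have h := confWeight_move ha hb hab hij
  have e1 : pnum (moveMap i j a b x) i + 2 = pnum x i := pnum_move_i ha hb hab hij
  have hc : ((pnum x i : ℝ) - 1) = ((pnum (moveMap i j a b x) i : ℝ) + 1) := by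
    have h2 : ((pnum (moveMap i j a b x) i + 2 : ℕ) : ℝ) = ((pnum x i : ℕ) : ℝ) := by
      exact_mod_cast congrArg (fun t : ℕ => (t : ℝ)) e1
    push_cast at h2
    linarith
  rw [hc]
  have hr : ((confWeight x : ℝ)) * (((pnum x j : ℝ)) + 1)^2
      = (confWeight (moveMap i j a b x) : ℝ) * (((pnum (moveMap i j a b x) i : ℝ)) + 1)^2 := by
    exact_mod_cast congrArg (fun t : ℕ => (t : ℝ)) h
  have := congrArg Real.sqrt hr
  rw [Real.sqrt_mul (by positivity), Real.sqrt_mul (by positivity),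
    Real.sqrt_sq (by positivity), Real.sqrt_sq (by positivity)] at this
  linarith

lemma chi_move_val {N n : ℕ} {σ : Equiv.Perm (Fin n)} {i j : Fin N} {a b : Fin n}
    {x : Fin n → Fin N} (ha : x a = i) (hb : x b = i) (hab : a ≠ b) (hij : i ≠ j)
    (hy : ∀ c, (moveMap i j a b x) (σ c) = (moveMap i j a b x) c) :
    chi σ (moveMap i j a b x)
      = ((pnum x i : ℝ) - 1) / (((pnum x j : ℝ) + 1) * Real.sqrt (confWeight x)) := by
  rw [chi, if_pos hy]
  have hs := sqrt_confWeight_move ha hb hab hij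
  have h1 := sqrt_confWeight_pos (moveMap i j a b x)
  have h2 := sqrt_confWeight_pos x
  have h3 : (0:ℝ) < (pnum x j : ℝ) + 1 := by positivity
  rw [div_eq_div_iff (by positivity) (by positivity)]
  linarith

lemma chi_swap_val {N n : ℕ} {σ : Equiv.Perm (Fin n)} {i j : Fin N} {a b : Fin n}
    {x : Fin n → Fin N} (ha : x a = i) (hb : x b = j) (hij : i ≠ j)
    (hy : ∀ c, (swapMap i j a b x) (σ c) = (swapMap i j a b x) c) :
    chi σ (swapMap i j a b x) = 1 / Real.sqrt (confWeight x) := by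
  rw [chi, if_pos hy, confWeight_swap ha hb hij]

lemma chi_not_inv {N n : ℕ} {σ : Equiv.Perm (Fin n)} {y : Fin n → Fin N}
    (hy : ¬ ∀ c, y (σ c) = y c) : chi σ y = 0 := by
  rw [chi, if_neg hy, zero_div]

lemma sigma_sigma {n : ℕ} {σ : Equiv.Perm (Fin n)} (hinv : σ * σ = 1) :
    ∀ c, σ (σ c) = c := by
  intro c
  have := congrArg (fun τ : Equiv.Perm (Fin n) => τ c) hinv
  simpa using this

/-- move-invariance characterization when `x` is invariant -/
lemma move_inv_iff_inv {N n : ℕ} {σ : Equiv.Perm (Fin n)} {i j : Fin N} {a b : Fin n}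
    {x : Fin n → Fin N} (hσ2 : ∀ c, σ (σ c) = c) (hσf : ∀ c, σ c ≠ c)
    (hij : i ≠ j) (ha : x a = i) (hb : x b = i) (hab : a ≠ b)
    (hInv : ∀ c, x (σ c) = x c) :
    (∀ c, moveMap i j a b x (σ c) = moveMap i j a b x c) ↔ σ a = b := by
  obtain ⟨e1, e2, e3⟩ := moveMap_eval (i := i) (j := j) ha hb
  constructor
  · intro h
    by_contra hs
    have hsa : σ a ≠ a := hσf a
    have k1 : moveMap i j a b x (σ a) = i := by rw [e3 _ hsa hs, hInv a, ha]
    rw [h a, e1] at k1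
    exact hij k1.symm
  · intro hs c
    have hs' : σ b = a := by rw [← hs, hσ2]
    by_cases hc1 : c = a
    · subst hc1; rw [hs, e1, e2]
    by_cases hc2 : c = b
    · subst hc2; rw [hs', e1, e2]
    · have hsc1 : σ c ≠ a := fun e => hc2 (by rw [← hσ2 c, e, hs])
      have hsc2 : σ c ≠ b := fun e => hc1 (by rw [← hσ2 c, e, hs'])
      rw [e3 _ hsc1 hsc2, e3 _ hc1 hc2, hInv c]

/-- swaps are never invariant when `x` is invariant -/
lemma swap_not_inv_inv {N n : ℕ} {σ : Equiv.Perm (Fin n)} {i j : Fin N} {a b : Fin n}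
    {x : Fin n → Fin N} (hσf : ∀ c, σ c ≠ c)
    (hij : i ≠ j) (ha : x a = i) (hb : x b = j)
    (hInv : ∀ c, x (σ c) = x c) :
    ¬ (∀ c, swapMap i j a b x (σ c) = swapMap i j a b x c) := by
  intro h
  obtain ⟨e1, e2, e3⟩ := swapMap_eval ha hb hij
  have hsa : σ a ≠ a := hσf a
  by_cases hs : σ a = b
  · have k1 : swapMap i j a b x (σ a) = i := by rw [hs, e2]
    rw [h a, e1] at k1
    exact hij k1.symm
  · have k1 : swapMap i j a b x (σ a) = i := by rw [e3 _ hsa hs, hInv a, ha]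
    rw [h a, e1] at k1
    exact hij k1.symm

/-- move-invariance characterization when `x` is NOT invariant -/
lemma move_inv_iff_ninv {N n : ℕ} {σ : Equiv.Perm (Fin n)} {i j : Fin N} {a b : Fin n}
    {x : Fin n → Fin N} (hσ2 : ∀ c, σ (σ c) = c) (hσf : ∀ c, σ c ≠ c)
    (hij : i ≠ j) (hab : a ≠ b) (hninv : ¬ ∀ c, x (σ c) = x c) :
    (∀ c, moveMap i j a b x (σ c) = moveMap i j a b x c) ↔
      (x a = i ∧ x b = i ∧ x (σ a) = j ∧ x (σ b) = j ∧
        ∀ c, x (σ c) ≠ x c → (c = a ∨ c = b ∨ c = σ a ∨ c = σ b)) := by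
  by_cases hab' : x a = i ∧ x b = i
  · obtain ⟨ha, hb⟩ := hab'
    obtain ⟨e1, e2, e3⟩ := moveMap_eval (i := i) (j := j) ha hb
    constructor
    · intro h
      have hsab : σ a ≠ b := by
        intro hs
        have hs' : σ b = a := by rw [← hs, hσ2]
        apply hninv
        intro c
        by_cases hc1 : c = a
        · subst hc1; rw [hs, hb, ha]
        by_cases hc2 : c = b
        · subst hc2; rw [hs', ha, hb]
        · have hsc1 : σ c ≠ a := fun e => hc2 (by rw [← hσ2 c, e, hs])
          have hsc2 : σ c ≠ b := fun e => hc1 (by rw [← hσ2 c, e, hs'])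
          have := h c
          rwa [e3 _ hsc1 hsc2, e3 _ hc1 hc2] at this
      have hsba : σ b ≠ a := fun e => hsab (by rw [← e, hσ2])
      have f1 : x (σ a) = j := by
        have := h a
        rwa [e3 _ (hσf a) hsab, e1] at this
      have f2 : x (σ b) = j := by
        have := h b
        rwa [e3 _ hsba (hσf b), e2] at this
      refine ⟨ha, hb, f1, f2, ?_⟩
      intro c hc
      by_contra hcon
      push_neg at hcon
      obtain ⟨c1, c2, c3, c4⟩ := hcon
      have sc1 : σ c ≠ a := fun e => c3 (by rw [← hσ2 c, e])
      have sc2 : σ c ≠ b := fun e => c4 (by rw [← hσ2 c, e])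
      have := h c
      rw [e3 _ sc1 sc2, e3 _ c1 c2] at this
      exact hc this
    · rintro ⟨-, -, f1, f2, hD⟩
      have s1 : σ a ≠ a := hσf a
      have s2 : σ a ≠ b := fun e => hij (by rw [← f1, e, hb])
      have s3 : σ b ≠ b := hσf b
      have s4 : σ b ≠ a := fun e => hij (by rw [← f2, e, ha])
      intro c
      by_cases hc1 : c = a
      · subst hc1; rw [e1, e3 _ s1 s2, f1]
      by_cases hc2 : c = b
      · subst hc2; rw [e2, e3 _ s4 s3, f2]
      by_cases hc3 : c = σ a
      · subst hc3
        rw [e3 _ s1 s2, f1, hσ2, e1]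
      by_cases hc4 : c = σ b
      · subst hc4
        rw [e3 _ s4 s3, f2, hσ2, e2]
      · have hxc : x (σ c) = x c := by
          by_contra hne
          rcases hD c hne with h | h | h | h <;> [exact hc1 h; exact hc2 h; exact hc3 h;
            exact hc4 h]
        have sc1 : σ c ≠ a := fun e => hc3 (by rw [← hσ2 c, e])
        have sc2 : σ c ≠ b := fun e => hc4 (by rw [← hσ2 c, e])
        rw [e3 _ sc1 sc2, e3 _ hc1 hc2, hxc]
  · rw [moveMap_trivial hab']
    constructor
    · intro h; exact absurd h hninv
    · rintro ⟨ha, hb, -⟩; exact absurd ⟨ha, hb⟩ hab'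

/-- swap-invariance characterization when `x` is NOT invariant -/
lemma swap_inv_iff_ninv {N n : ℕ} {σ : Equiv.Perm (Fin n)} {i j : Fin N} {a b : Fin n}
    {x : Fin n → Fin N} (hσ2 : ∀ c, σ (σ c) = c) (hσf : ∀ c, σ c ≠ c)
    (hij : i ≠ j) (hninv : ¬ ∀ c, x (σ c) = x c) :
    (∀ c, swapMap i j a b x (σ c) = swapMap i j a b x c) ↔
      (x a = i ∧ x b = j ∧ σ a ≠ b ∧ x (σ a) = j ∧ x (σ b) = i ∧
        ∀ c, x (σ c) ≠ x c → (c = a ∨ c = b ∨ c = σ a ∨ c = σ b)) := by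
  by_cases hab' : x a = i ∧ x b = j
  · obtain ⟨ha, hb⟩ := hab'
    obtain ⟨e1, e2, e3⟩ := swapMap_eval ha hb hij
    have hab : a ≠ b := fun e => hij (by rw [← ha, e, hb])
    constructor
    · intro h
      have hsab : σ a ≠ b := by
        intro hs
        have k1 : swapMap i j a b x (σ a) = i := by rw [hs, e2]
        rw [h a, e1] at k1
        exact hij k1.symm
      have hsba : σ b ≠ a := fun e => hsab (by rw [← e, hσ2])
      have f1 : x (σ a) = j := by
        have := h a
        rwa [e3 _ (hσf a) hsab, e1] at this
      have f2 : x (σ b) = i := by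
        have := h b
        rwa [e3 _ hsba (hσf b), e2] at this
      refine ⟨ha, hb, hsab, f1, f2, ?_⟩
      intro c hc
      by_contra hcon
      push_neg at hcon
      obtain ⟨c1, c2, c3, c4⟩ := hcon
      have sc1 : σ c ≠ a := fun e => c3 (by rw [← hσ2 c, e])
      have sc2 : σ c ≠ b := fun e => c4 (by rw [← hσ2 c, e])
      have := h c
      rw [e3 _ sc1 sc2, e3 _ c1 c2] at this
      exact hc this
    · rintro ⟨-, -, hsab, f1, f2, hD⟩
      have s1 : σ a ≠ a := hσf a
      have s3 : σ b ≠ b := hσf b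
      have s4 : σ b ≠ a := fun e => hsab (by rw [← e, hσ2])
      intro c
      by_cases hc1 : c = a
      · subst hc1; rw [e1, e3 _ s1 hsab, f1]
      by_cases hc2 : c = b
      · subst hc2; rw [e2, e3 _ s4 s3, f2]
      by_cases hc3 : c = σ a
      · subst hc3
        rw [e3 _ s1 hsab, f1, hσ2, e1]
      by_cases hc4 : c = σ b
      · subst hc4
        rw [e3 _ s4 s3, f2, hσ2, e2]
      · have hxc : x (σ c) = x c := by
          by_contra hne
          rcases hD c hne with h | h | h | h <;> [exact hc1 h; exact hc2 h; exact hc3 h;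
            exact hc4 h]
        have sc1 : σ c ≠ a := fun e => hc3 (by rw [← hσ2 c, e])
        have sc2 : σ c ≠ b := fun e => hc4 (by rw [← hσ2 c, e])
        rw [e3 _ sc1 sc2, e3 _ hc1 hc2, hxc]
  · rw [swapMap_trivial hab']
    constructor
    · intro h; exact absurd h hninv
    · rintro ⟨ha, hb, -⟩; exact absurd ⟨ha, hb⟩ hab'

lemma case1_move_sum {N n : ℕ} {σ : Equiv.Perm (Fin n)} {x : Fin n → Fin N}
    (hσ2 : ∀ c, σ (σ c) = c) (hσf : ∀ c, σ c ≠ c)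
    (hInv : ∀ c, x (σ c) = x c) {i j : Fin N} (hij : i ≠ j)
    (hx : Even (pnum x i)) :
    ((pnum x j : ℝ) + 1) / ((pnum x i : ℝ) - 1) *
      ∑ a, ∑ b ∈ Finset.univ.erase a, (chi σ (moveMap i j a b x) - chi σ x)
    = -((pnum x i : ℝ) * (pnum x j : ℝ)) / Real.sqrt (confWeight x) := by
  have hchix : chi σ x = 1 / Real.sqrt (confWeight x) := by rw [chi, if_pos hInv]
  by_cases h0 : pnum x i = 0
  · have hfe : Finset.univ.filter (fun a => x a = i) = ∅ := Finset.card_eq_zero.mp h0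
    have hxa : ∀ a : Fin n, x a ≠ i := by
      intro a ha
      have : a ∈ Finset.univ.filter (fun a => x a = i) :=
        Finset.mem_filter.mpr ⟨Finset.mem_univ a, ha⟩
      rw [hfe] at this
      exact absurd this (Finset.notMem_empty a)
    have hz : ∑ a, ∑ b ∈ Finset.univ.erase a, (chi σ (moveMap i j a b x) - chi σ x) = 0 := by
      apply Finset.sum_eq_zero; intro a _
      apply Finset.sum_eq_zero; intro b _
      rw [moveMap_trivial (fun h => hxa a h.1)]; ring
    rw [hz, h0]
    simp
  · have h2 : 2 ≤ pnum x i := by rcases hx with ⟨m, hm⟩; omega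
    set sq := Real.sqrt (confWeight x) with hsqdef
    have hsq : 0 < sq := sqrt_confWeight_pos x
    have key : ∀ a, x a = i → ∑ b ∈ Finset.univ.erase a,
        (chi σ (moveMap i j a b x) - chi σ x)
        = ((pnum x i : ℝ) - 1) / (((pnum x j : ℝ) + 1) * sq)
          - ((pnum x i : ℝ) - 1) * (1 / sq) := by
      intro a ha
      have step : ∀ b ∈ Finset.univ.erase a, (chi σ (moveMap i j a b x) - chi σ x)
          = (if b = σ a then ((pnum x i : ℝ) - 1) / (((pnum x j : ℝ) + 1) * sq) else 0)
            - (if x b = i then 1 / sq else 0) := by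
        intro b hb
        have hba : b ≠ a := (Finset.mem_erase.mp hb).1
        by_cases hxb : x b = i
        · by_cases hs : σ a = b
          · have hy := (move_inv_iff_inv hσ2 hσf hij ha hxb hba.symm hInv).mpr hs
            rw [chi_move_val ha hxb hba.symm hij hy, hchix, if_pos hs.symm, if_pos hxb]
          · have hy : ¬ ∀ c, moveMap i j a b x (σ c) = moveMap i j a b x c :=
              fun hy => hs ((move_inv_iff_inv hσ2 hσf hij ha hxb hba.symm hInv).mp hy)
            rw [chi_not_inv hy, hchix, if_neg (fun e => hs e.symm), if_pos hxb]
        · have hbs : b ≠ σ a := fun e => hxb (by rw [e, hInv a, ha])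
          rw [moveMap_trivial (fun h => hxb h.2), if_neg hbs, if_neg hxb]
          ring
      rw [Finset.sum_congr rfl step, Finset.sum_sub_distrib]
      have p1 : ∑ b ∈ Finset.univ.erase a,
          (if b = σ a then ((pnum x i : ℝ) - 1) / (((pnum x j : ℝ) + 1) * sq) else 0)
          = ((pnum x i : ℝ) - 1) / (((pnum x j : ℝ) + 1) * sq) := by
        rw [Finset.sum_ite_eq']
        exact if_pos (Finset.mem_erase.mpr ⟨hσf a, Finset.mem_univ _⟩)
      have p2 : ∑ b ∈ Finset.univ.erase a, (if x b = i then 1 / sq else 0)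
          = ((pnum x i : ℝ) - 1) * (1 / sq) := by
        rw [← Finset.sum_filter, Finset.filter_erase, Finset.sum_const,
          Finset.card_erase_of_mem (Finset.mem_filter.mpr ⟨Finset.mem_univ a, ha⟩)]
        rw [nsmul_eq_mul]
        have : ((pnum x i - 1 : ℕ) : ℝ) = (pnum x i : ℝ) - 1 := by
          rw [Nat.cast_sub (by omega)]; norm_num
        rw [pnum] at this ⊢
        rw [this]
      rw [p1, p2]
    have outer : ∀ a, ∑ b ∈ Finset.univ.erase a, (chi σ (moveMap i j a b x) - chi σ x)
        = if x a = i then (((pnum x i : ℝ) - 1) / (((pnum x j : ℝ) + 1) * sq)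
            - ((pnum x i : ℝ) - 1) * (1 / sq)) else 0 := by
      intro a
      by_cases ha : x a = i
      · rw [key a ha, if_pos ha]
      · rw [if_neg ha]
        apply Finset.sum_eq_zero; intro b _
        rw [moveMap_trivial (fun h => ha h.1)]; ring
    rw [Finset.sum_congr rfl (fun a _ => outer a), ← Finset.sum_filter, Finset.sum_const,
      nsmul_eq_mul]
    have hni : (2 : ℝ) ≤ (pnum x i : ℝ) := by exact_mod_cast h2
    have hni1 : (pnum x i : ℝ) - 1 ≠ 0 := by linarith
    have hnj1 : (pnum x j : ℝ) + 1 ≠ 0 := by positivity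
    rw [show (Finset.univ.filter fun a => x a = i).card = pnum x i from rfl]
    field_simp
    ring

lemma case1_exch_sum {N n : ℕ} {σ : Equiv.Perm (Fin n)} {x : Fin n → Fin N}
    (hσf : ∀ c, σ c ≠ c)
    (hInv : ∀ c, x (σ c) = x c) {i j : Fin N} (hij : i ≠ j) :
    ∑ a, ∑ b ∈ Finset.univ.erase a, (chi σ (swapMap i j a b x) - chi σ x)
      = -((pnum x i : ℝ) * (pnum x j : ℝ)) / Real.sqrt (confWeight x) := by
  have hchix : chi σ x = 1 / Real.sqrt (confWeight x) := by rw [chi, if_pos hInv]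
  set sq := Real.sqrt (confWeight x) with hsqdef
  have hsq : 0 < sq := sqrt_confWeight_pos x
  have outer : ∀ a, ∑ b ∈ Finset.univ.erase a, (chi σ (swapMap i j a b x) - chi σ x)
      = if x a = i then -((pnum x j : ℝ) * (1 / sq)) else 0 := by
    intro a
    by_cases ha : x a = i
    · rw [if_pos ha]
      have step : ∀ b ∈ Finset.univ.erase a, (chi σ (swapMap i j a b x) - chi σ x)
          = if x b = j then -(1 / sq) else 0 := by
        intro b _
        by_cases hxb : x b = j
        · have hy := swap_not_inv_inv hσf hij ha hxb hInv
          rw [chi_not_inv hy, hchix, if_pos hxb]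
          ring
        · rw [swapMap_trivial (fun h => hxb h.2), if_neg hxb]
          ring
      have hanotm : a ∉ Finset.univ.filter (fun b => x b = j) := by
        intro hm
        exact hij (by rw [← ha]; exact (Finset.mem_filter.mp hm).2)
      rw [Finset.sum_congr rfl step, ← Finset.sum_filter, Finset.filter_erase,
        Finset.erase_eq_of_notMem hanotm, Finset.sum_const, nsmul_eq_mul]
      rw [show (Finset.univ.filter fun b => x b = j).card = pnum x j from rfl]
      ring
    · rw [if_neg ha]
      apply Finset.sum_eq_zero; intro b _
      rw [swapMap_trivial (fun h => ha h.1)]; ring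
  rw [Finset.sum_congr rfl (fun a _ => outer a), ← Finset.sum_filter, Finset.sum_const,
    nsmul_eq_mul]
  rw [show (Finset.univ.filter fun a => x a = i).card = pnum x i from rfl]
  field_simp

def Dcond {N n : ℕ} (σ : Equiv.Perm (Fin n)) (x : Fin n → Fin N) (a b : Fin n) : Prop :=
  ∀ c, x (σ c) ≠ x c → (c = a ∨ c = b ∨ c = σ a ∨ c = σ b)

def CmP {N n : ℕ} (σ : Equiv.Perm (Fin n)) (x : Fin n → Fin N) (i j : Fin N)
    (a b : Fin n) : Prop :=
  x a = i ∧ x b = i ∧ x (σ a) = j ∧ x (σ b) = j ∧ Dcond σ x a b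

def CsP {N n : ℕ} (σ : Equiv.Perm (Fin n)) (x : Fin n → Fin N) (i j : Fin N)
    (a b : Fin n) : Prop :=
  x a = i ∧ x b = j ∧ σ a ≠ b ∧ x (σ a) = j ∧ x (σ b) = i ∧ Dcond σ x a b

lemma case2_move_sum {N n : ℕ} {σ : Equiv.Perm (Fin n)} {x : Fin n → Fin N}
    (hσ2 : ∀ c, σ (σ c) = c) (hσf : ∀ c, σ c ≠ c) {i j : Fin N} (hij : i ≠ j)
    (hninv : ¬ ∀ c, x (σ c) = x c) :
    ∑ a, ∑ b ∈ Finset.univ.erase a, (chi σ (moveMap i j a b x) - chi σ x)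
      = (((pnum x i : ℝ) - 1) / (((pnum x j : ℝ) + 1) * Real.sqrt (confWeight x))) *
        ∑ a, ∑ b, (if a ≠ b ∧ CmP σ x i j a b then (1:ℝ) else 0) := by
  have hchix : chi σ x = 0 := chi_not_inv hninv
  have key : ∀ a, ∑ b ∈ Finset.univ.erase a, (chi σ (moveMap i j a b x) - chi σ x)
      = ∑ b, (if a ≠ b ∧ CmP σ x i j a b then
          ((pnum x i : ℝ) - 1) / (((pnum x j : ℝ) + 1) * Real.sqrt (confWeight x)) else 0) := by
    intro a
    rw [← Finset.sum_erase (Finset.univ) (a := a) (by simp)]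
    apply Finset.sum_congr rfl
    intro b hb
    have hba : b ≠ a := (Finset.mem_erase.mp hb).1
    rw [hchix, sub_zero]
    by_cases hCm : CmP σ x i j a b
    · obtain ⟨ha, hxb, f1, f2, hD⟩ := hCm
      have hy := (move_inv_iff_ninv hσ2 hσf hij hba.symm hninv).mpr ⟨ha, hxb, f1, f2, hD⟩
      rw [chi_move_val ha hxb hba.symm hij hy, if_pos ⟨hba.symm, ha, hxb, f1, f2, hD⟩]
    · have hy : ¬ ∀ c, moveMap i j a b x (σ c) = moveMap i j a b x c := fun hy =>
        hCm ((move_inv_iff_ninv hσ2 hσf hij hba.symm hninv).mp hy)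
      rw [chi_not_inv hy, if_neg (fun h => hCm h.2)]
  rw [Finset.sum_congr rfl (fun a _ => key a), Finset.mul_sum]
  apply Finset.sum_congr rfl
  intro a _
  rw [Finset.mul_sum]
  apply Finset.sum_congr rfl
  intro b _
  rw [mul_ite, mul_one, mul_zero]

lemma case2_exch_sum {N n : ℕ} {σ : Equiv.Perm (Fin n)} {x : Fin n → Fin N}
    (hσ2 : ∀ c, σ (σ c) = c) (hσf : ∀ c, σ c ≠ c) {i j : Fin N} (hij : i ≠ j)
    (hninv : ¬ ∀ c, x (σ c) = x c) :
    ∑ a, ∑ b ∈ Finset.univ.erase a, (chi σ (swapMap i j a b x) - chi σ x)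
      = (1 / Real.sqrt (confWeight x)) *
        ∑ a, ∑ b, (if a ≠ b ∧ CsP σ x i j a b then (1:ℝ) else 0) := by
  have hchix : chi σ x = 0 := chi_not_inv hninv
  have key : ∀ a, ∑ b ∈ Finset.univ.erase a, (chi σ (swapMap i j a b x) - chi σ x)
      = ∑ b, (if a ≠ b ∧ CsP σ x i j a b then 1 / Real.sqrt (confWeight x) else 0) := by
    intro a
    rw [← Finset.sum_erase (Finset.univ) (a := a) (by simp)]
    apply Finset.sum_congr rfl
    intro b hb
    have hba : b ≠ a := (Finset.mem_erase.mp hb).1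
    rw [hchix, sub_zero]
    by_cases hCs : CsP σ x i j a b
    · obtain ⟨ha, hxb, f0, f1, f2, hD⟩ := hCs
      have hy := (swap_inv_iff_ninv hσ2 hσf hij hninv).mpr ⟨ha, hxb, f0, f1, f2, hD⟩
      rw [chi_swap_val ha hxb hij hy, if_pos ⟨hba.symm, ha, hxb, f0, f1, f2, hD⟩]
    · have hy : ¬ ∀ c, swapMap i j a b x (σ c) = swapMap i j a b x c := fun hy =>
        hCs ((swap_inv_iff_ninv hσ2 hσf hij hninv).mp hy)
      rw [chi_not_inv hy, if_neg (fun h => hCs h.2)]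
  rw [Finset.sum_congr rfl (fun a _ => key a), Finset.mul_sum]
  apply Finset.sum_congr rfl
  intro a _
  rw [Finset.mul_sum]
  apply Finset.sum_congr rfl
  intro b _
  rw [mul_ite, mul_one, mul_zero]

lemma count_move_eq_swap {N n : ℕ} {σ : Equiv.Perm (Fin n)} {x : Fin n → Fin N}
    (hσ2 : ∀ c, σ (σ c) = c) {i j : Fin N} (hij : i ≠ j) :
    ∑ a, ∑ b, (if a ≠ b ∧ CmP σ x i j a b then (1:ℝ) else 0)
      = ∑ a, ∑ b, (if a ≠ b ∧ CsP σ x i j a b then (1:ℝ) else 0) := by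
  apply Finset.sum_congr rfl
  intro a _
  rw [← Equiv.sum_comp σ (fun b => if a ≠ b ∧ CsP σ x i j a b then (1:ℝ) else 0)]
  apply Finset.sum_congr rfl
  intro b _
  congr 1
  apply propext
  constructor
  · rintro ⟨hab, ha, hb, f1, f2, hD⟩
    refine ⟨fun e => hij (by rw [← ha, e, f2]), ha, f2, ?_, f1, ?_, ?_⟩
    · intro e; exact hab (by rw [← hσ2 a, ← hσ2 b, e])
    · rw [hσ2]; exact hb
    · intro c hc
      rcases hD c hc with h | h | h | h
      · exact Or.inl h
      · exact Or.inr (Or.inr (Or.inr (by rw [h, hσ2])))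
      · exact Or.inr (Or.inr (Or.inl h))
      · exact Or.inr (Or.inl h)
  · rintro ⟨hab, ha, hsb, hne, f1, f2, hD⟩
    rw [hσ2] at f2
    refine ⟨fun e => hne (by rw [e]), ha, f2, f1, hsb, ?_⟩
    intro c hc
    rcases hD c hc with h | h | h | h
    · exact Or.inl h
    · exact Or.inr (Or.inr (Or.inr h))
    · exact Or.inr (Or.inr (Or.inl h))
    · exact Or.inr (Or.inl (by rw [h, hσ2]))

lemma count_move'_eq_swap {N n : ℕ} {σ : Equiv.Perm (Fin n)} {x : Fin n → Fin N}
    (hσ2 : ∀ c, σ (σ c) = c) {i j : Fin N} (hij : i ≠ j) :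
    ∑ a, ∑ b, (if a ≠ b ∧ CmP σ x j i a b then (1:ℝ) else 0)
      = ∑ a, ∑ b, (if a ≠ b ∧ CsP σ x i j a b then (1:ℝ) else 0) := by
  rw [← Equiv.sum_comp σ (fun a => ∑ b, (if a ≠ b ∧ CsP σ x i j a b then (1:ℝ) else 0))]
  apply Finset.sum_congr rfl
  intro a _
  apply Finset.sum_congr rfl
  intro b _
  congr 1
  apply propext
  constructor
  · rintro ⟨hab, ha, hb, f1, f2, hD⟩
    refine ⟨fun e => hij (by rw [← f1, e, hb]), f1, hb, ?_, ?_, f2, ?_⟩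
    · rw [hσ2]; exact hab
    · rw [hσ2]; exact ha
    · intro c hc
      rcases hD c hc with h | h | h | h
      · exact Or.inr (Or.inr (Or.inl (by rw [h, hσ2])))
      · exact Or.inr (Or.inl h)
      · exact Or.inl h
      · exact Or.inr (Or.inr (Or.inr h))
  · rintro ⟨hab, ha, hb, hne, f1, f2, hD⟩
    rw [hσ2] at hne f1
    refine ⟨hne, f1, hb, ha, f2, ?_⟩
    intro c hc
    rcases hD c hc with h | h | h | h
    · exact Or.inr (Or.inr (Or.inl h))
    · exact Or.inr (Or.inl h)
    · exact Or.inl (by rw [h, hσ2])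
    · exact Or.inr (Or.inr (Or.inr h))


/-- for any perfect matching `σ` of `[n]` and sites `i < j`, the stratum
indicator `χ_σ` is annihilated by `B_{ij} = M_{ij} − E_{ij}`:
`(M_{ij} χ_σ)(x) = (E_{ij} χ_σ)(x)` for all `x ∈ Λ^n`. -/
theorem stmt_11 (N n : ℕ) (hne : Even n)
    (σ : Equiv.Perm (Fin n)) (hinv : σ * σ = 1) (hfpf : ∀ a, σ a ≠ a)
    (i j : Fin N) (hij : i < j)
    (x : Fin n → Fin N) (hx : ∀ k, Even (pnum x k)) :
    moveOp i j (chi σ) x = exchOp i j (chi σ) x := by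
  have hσ2 : ∀ c, σ (σ c) = c := sigma_sigma hinv
  have hij' : i ≠ j := Fin.ne_of_lt hij
  rw [moveOp, exchOp]
  by_cases hInv : ∀ c, x (σ c) = x c
  · rw [case1_move_sum hσ2 hfpf hInv hij' (hx i), case1_move_sum hσ2 hfpf hInv hij'.symm (hx j),
      case1_exch_sum hfpf hInv hij']
    ring
  · rw [case2_move_sum hσ2 hfpf hij' hInv, case2_move_sum hσ2 hfpf hij'.symm hInv,
      case2_exch_sum hσ2 hfpf hij' hInv, count_move_eq_swap hσ2 hij',
      count_move'_eq_swap hσ2 hij']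
    set T := ∑ a, ∑ b, (if a ≠ b ∧ CsP σ x i j a b then (1:ℝ) else 0) with hT
    by_cases hT0 : T = 0
    · rw [hT0]; ring
    · have hw : ∃ a b, a ≠ b ∧ CsP σ x i j a b := by
        by_contra hcon
        push_neg at hcon
        apply hT0
        rw [hT]
        apply Finset.sum_eq_zero; intro a _
        apply Finset.sum_eq_zero; intro b _
        rw [if_neg]
        rintro ⟨h1, h2⟩
        exact (hcon a b h1) h2
      obtain ⟨a, b, hab, ha1, hb1, hs1, f1, f2, hD⟩ := hw
      have hasb : a ≠ σ b := fun e => hs1 (by rw [e, hσ2])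
      have hbsa : b ≠ σ a := fun e => hs1 e.symm
      have hni : 2 ≤ pnum x i := by
        have hsub : ({a, σ b} : Finset (Fin n)) ⊆ Finset.univ.filter (fun c => x c = i) := by
          intro c hc
          simp only [Finset.mem_insert, Finset.mem_singleton] at hc
          rcases hc with rfl | rfl
          · exact Finset.mem_filter.mpr ⟨Finset.mem_univ _, ha1⟩
          · exact Finset.mem_filter.mpr ⟨Finset.mem_univ _, f2⟩
        have := Finset.card_le_card hsub
        rwa [Finset.card_pair hasb] at this
      have hnj : 2 ≤ pnum x j := by
        have hsub : ({b, σ a} : Finset (Fin n)) ⊆ Finset.univ.filter (fun c => x c = j) := by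
          intro c hc
          simp only [Finset.mem_insert, Finset.mem_singleton] at hc
          rcases hc with rfl | rfl
          · exact Finset.mem_filter.mpr ⟨Finset.mem_univ _, hb1⟩
          · exact Finset.mem_filter.mpr ⟨Finset.mem_univ _, f1⟩
        have := Finset.card_le_card hsub
        rwa [Finset.card_pair hbsa] at this
      have hniR : (2:ℝ) ≤ (pnum x i : ℝ) := by exact_mod_cast hni
      have hnjR : (2:ℝ) ≤ (pnum x j : ℝ) := by exact_mod_cast hnj
      have h1 : (pnum x i : ℝ) - 1 ≠ 0 := by linarith
      have h2 : (pnum x j : ℝ) - 1 ≠ 0 := by linarith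
      have h3 : (pnum x i : ℝ) + 1 ≠ 0 := by positivity
      have h4 : (pnum x j : ℝ) + 1 ≠ 0 := by positivity
      have h5 : Real.sqrt (confWeight x) ≠ 0 := ne_of_gt (sqrt_confWeight_pos x)
      field_simp
      ring

end
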